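/- Suppose Assumption (RC) holds: (i) x̄ is an M-stationary point of (P), ȳ ∈ Λ(x̄), and the upper error bound holds, i.e., there exist ρ_u > 0 and a neighborhood U of (x̄, c(x̄), ȳ) with ‖x − x̄‖ + ‖z − c(x̄)‖ + ‖y − ȳ‖ ≤ ρ_u·Θ(x, z, y) for all (x, z, y) ∈ U with z ∈ dom g; (ii) {(x^k, z^k, y^k)} is generated by the safeguarded implicit augmented Lagrangian algorithm with ε_k → 0; (iii) (x^k, y^k) → (x̄, ȳ); (iv) ŷ^k = y^{k−1} for all sufficiently large k. Then, setting Θ_k := Θ(x^k, z^k, y^k), the inequality (1 − ρ_u μ_k)·Θ_k ≤ ε_k + ρ_u μ_k·Θ_{k−1} holds for all sufficiently large k. -/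

import Mathlib

open Filter Topology Bornology

noncomputable section

/-- Euclidean space `ℝ^d`. -/
abbrev Euc (d : ℕ) := EuclideanSpace ℝ (Fin d)

namespace Paper

variable {n m : ℕ}

/-- The effective domain of an extended-real-valued function. -/
def edom (g : Euc m → EReal) : Set (Euc m) := {z | g z < ⊤}

/-- `g` maps into `ℝ ∪ {∞}` and is proper (its domain is nonempty). -/
def ProperFn (g : Euc m → EReal) : Prop := (∀ z, g z ≠ ⊥) ∧ ∃ z, g z < ⊤

/-- `z ↦ g z + ‖z‖²/(2μ)` is bounded below. -/
def ProxBoundedWith (g : Euc m → EReal) (μ : ℝ) : Prop :=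
  ∃ b : ℝ, ∀ z, (b : EReal) ≤ g z + ((‖z‖ ^ 2 / (2 * μ) : ℝ) : EReal)

/-- `g` is prox-bounded. -/
def ProxBounded (g : Euc m → EReal) : Prop := ∃ μ : ℝ, 0 < μ ∧ ProxBoundedWith g μ

/-- `0 < μ < μ_g`, where `μ_g` is the threshold of prox-boundedness of `g`. -/
def BelowThreshold (g : Euc m → EReal) (μ : ℝ) : Prop :=
  0 < μ ∧ ∃ μ' : ℝ, μ < μ' ∧ ProxBoundedWith g μ'

/-- The tangent cone to `Ω` at `wbar`. -/
def tangentCone {E : Type*} [NormedAddCommGroup E] [NormedSpace ℝ E]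
    (Ω : Set E) (wbar : E) : Set E :=
  {v | ∃ (t : ℕ → ℝ) (w : ℕ → E), (∀ k, 0 < t k) ∧ Tendsto t atTop (𝓝 0) ∧
        Tendsto w atTop (𝓝 v) ∧ ∀ k, wbar + t k • w k ∈ Ω}

/-- The regular (Fréchet) subdifferential of `g` at `zbar`. -/
def regSubdiff (g : Euc m → EReal) (zbar : Euc m) : Set (Euc m) :=
  {v | 0 ≤ liminf (fun z : Euc m =>
      (g z - g zbar - ((inner ℝ v (z - zbar) : ℝ) : EReal)) / ((‖z - zbar‖ : ℝ) : EReal))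
      (𝓝[≠] zbar)}

/-- The limiting (Mordukhovich) subdifferential of `g` at `zbar`. -/
def limSubdiff (g : Euc m → EReal) (zbar : Euc m) : Set (Euc m) :=
  {v | ∃ zs vs : ℕ → Euc m, Tendsto zs atTop (𝓝 zbar) ∧
        Tendsto (fun k => g (zs k)) atTop (𝓝 (g zbar)) ∧
        Tendsto vs atTop (𝓝 v) ∧ ∀ k, vs k ∈ regSubdiff g (zs k)}

/-- The subderivative `dg(zbar)(v)`. -/
def subderiv (g : Euc m → EReal) (zbar v : Euc m) : EReal :=
  liminf (fun p : ℝ × Euc m => (g (zbar + p.1 • p.2) - g zbar) / ((p.1 : ℝ) : EReal))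
    ((𝓝[>] (0 : ℝ)) ×ˢ 𝓝 v)

/-- The second subderivative `d²g(zbar, ybar)(v)`. -/
def secondSubderiv (g : Euc m → EReal) (zbar ybar v : Euc m) : EReal :=
  liminf (fun p : ℝ × Euc m =>
      (g (zbar + p.1 • p.2) - g zbar - ((p.1 * (inner ℝ ybar p.2 : ℝ) : ℝ) : EReal)) /
        ((p.1 ^ 2 / 2 : ℝ) : EReal))
    ((𝓝[>] (0 : ℝ)) ×ˢ 𝓝 v)

/-- The Lagrangian `L(·, y) = f + ⟨y, c ·⟩` of (P). -/
def LagFn (f : Euc n → ℝ) (c : Euc n → Euc m) (y : Euc m) : Euc n → ℝ :=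
  fun x => f x + (inner ℝ y (c x) : ℝ)

/-- `∇ₓL(xbar, y) = 0`. -/
def gradLagZero (f : Euc n → ℝ) (c : Euc n → Euc m) (xbar : Euc n) (y : Euc m) : Prop :=
  fderiv ℝ (LagFn f c y) xbar = 0

/-- The set `Λ(xbar)` of Lagrange multipliers of the M-stationarity system at `xbar`. -/
def Lambda (f : Euc n → ℝ) (c : Euc n → Euc m) (g : Euc m → EReal) (xbar : Euc n) :
    Set (Euc m) :=
  {y | gradLagZero f c xbar y ∧ y ∈ limSubdiff g (c xbar)}

/-- `∇²ₓₓL(xbar, y)[u, w]`. -/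
def hessLag (f : Euc n → ℝ) (c : Euc n → Euc m) (xbar : Euc n) (y : Euc m) (u w : Euc n) : ℝ :=
  iteratedFDeriv ℝ 2 (LagFn f c y) xbar ![u, w]

/-- The critical cone `C(xbar)` of (P). -/
def critCone (f : Euc n → ℝ) (c : Euc n → Euc m) (g : Euc m → EReal) (xbar : Euc n) :
    Set (Euc n) :=
  {u | ((fderiv ℝ f xbar u : ℝ) : EReal) + subderiv g (c xbar) (fderiv ℝ c xbar u) ≤ 0}

/-- The directional multiplier set `Λ(xbar, u)`. -/
def dirLambda (f : Euc n → ℝ) (c : Euc n → Euc m) (g : Euc m → EReal) (xbar : Euc n)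
    (u : Euc n) : Set (Euc m) :=
  {y | gradLagZero f c xbar y ∧
    subderiv g (c xbar) (fderiv ℝ c xbar u) = ((inner ℝ y (fderiv ℝ c xbar u) : ℝ) : EReal) ∧
    secondSubderiv g (c xbar) y (fderiv ℝ c xbar u) ≠ ⊥}

/-- The second-order sufficient condition (SOSC) for (P) at `xbar`. -/
def SOSC (f : Euc n → ℝ) (c : Euc n → Euc m) (g : Euc m → EReal) (xbar : Euc n) : Prop :=
  ∀ u ∈ critCone f c g xbar, u ≠ 0 → ∃ y ∈ dirLambda f c g xbar u,
    0 < ((hessLag f c xbar y u u : ℝ) : EReal) + secondSubderiv g (c xbar) y (fderiv ℝ c xbar u)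

/-- The stationarity residual `Θ(x, z, y)`; the distance to the (possibly empty)
subdifferential is taken in `EReal` via an infimum. -/
def Theta (f : Euc n → ℝ) (c : Euc n → Euc m) (g : Euc m → EReal)
    (x : Euc n) (z y : Euc m) : EReal :=
  ((‖fderiv ℝ (LagFn f c y) x‖ + ‖c x - z‖ : ℝ) : EReal) +
    ⨅ v ∈ limSubdiff g z, ((‖y - v‖ : ℝ) : EReal)

/-- The graphical derivative `D(∂g)(zbar, ybar)(v)` of the limiting subdifferential mapping. -/
def gDeriv (g : Euc m → EReal) (zbar ybar v : Euc m) : Set (Euc m) :=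
  {η | (v, η) ∈ tangentCone {p : Euc m × Euc m | p.2 ∈ limSubdiff g p.1} (zbar, ybar)}

/-- The Moreau envelope `g^μ(w)`. -/
def moreau (g : Euc m → EReal) (μ : ℝ) (w : Euc m) : EReal :=
  ⨅ z, (g z + ((‖z - w‖ ^ 2 / (2 * μ) : ℝ) : EReal))

/-- The augmented Lagrangian `L_μ(x, y)` of (P). -/
def ALfun (f : Euc n → ℝ) (c : Euc n → Euc m) (g : Euc m → EReal) (μ : ℝ)
    (x : Euc n) (y : Euc m) : EReal :=
  (f x : EReal) + moreau g μ (c x + μ • y) - ((μ / 2 * ‖y‖ ^ 2 : ℝ) : EReal)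

/-- `xbar` is a strict local minimizer of (P). -/
def StrictLocalMin (f : Euc n → ℝ) (c : Euc n → Euc m) (g : Euc m → EReal)
    (xbar : Euc n) : Prop :=
  c xbar ∈ edom g ∧ ∃ ρ : ℝ, 0 < ρ ∧ ∀ x : Euc n, ‖x - xbar‖ ≤ ρ → c x ∈ edom g → x ≠ xbar →
    (f xbar : EReal) + g (c xbar) < (f x : EReal) + g (c x)

open Classical in
/-- A sequence generated by the safeguarded implicit augmented Lagrangian method
(Algorithm 4.1) for problem (P). -/
structure ALMSeq (n m : ℕ) (f : Euc n → ℝ) (c : Euc n → Euc m) (g : Euc m → EReal) where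
  /-- sufficient-decrease parameter -/
  θ : ℝ
  /-- penalty-reduction parameter -/
  κ : ℝ
  hθ : 0 < θ ∧ θ < 1
  hκ : 0 < κ ∧ κ < 1
  /-- safeguarding set -/
  Y : Set (Euc m)
  hYne : Y.Nonempty
  hYbdd : IsBounded Y
  /-- primal iterates -/
  x : ℕ → Euc n
  /-- auxiliary (certificate) iterates -/
  z : ℕ → Euc m
  /-- safeguarded multiplier estimates -/
  yhat : ℕ → Euc m
  /-- multiplier iterates -/
  y : ℕ → Euc m
  /-- penalty parameters -/
  μ : ℕ → ℝ
  /-- inner tolerances -/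
  ε : ℕ → ℝ
  hyhatY : ∀ k, yhat k ∈ Y
  hεnn : ∀ k, 0 ≤ ε k
  hμthr : ∀ k, BelowThreshold g (μ k)
  /-- `z k ∈ prox_{μ_k g}(c(x^k) + μ_k ŷ^k)` -/
  hprox : ∀ k, ∀ w : Euc m,
    g (z k) + ((‖z k - (c (x k) + μ k • yhat k)‖ ^ 2 / (2 * μ k) : ℝ) : EReal) ≤
      g w + ((‖w - (c (x k) + μ k • yhat k)‖ ^ 2 / (2 * μ k) : ℝ) : EReal)
  /-- dual update rule -/
  hy : ∀ k, y k = yhat k + (μ k)⁻¹ • (c (x k) - z k)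
  /-- approximate stationarity for the subproblem, `‖∇ₓL^S_{μ_k}(x^k,z^k,ŷ^k)‖ ≤ ε_k` -/
  hdual : ∀ k, ‖fderiv ℝ (LagFn f c (y k)) (x k)‖ ≤ ε k
  /-- penalty update rule -/
  hμupd : ∀ k, μ (k + 1) =
    if k = 0 ∨ ‖c (x k) - z k‖ ≤ θ * ‖c (x (k - 1)) - z (k - 1)‖ then μ k else κ * μ k

/-!
Along the iterates, `z^k` is a proximal point of `g`, whose optimality condition makes `y^k` a
regular subgradient of `g` at `z^k`. Hence the distance term of `Θ_k` vanishes and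
`Θ_k = ‖∇ₓL(x^k, y^k)‖ + ‖c(x^k) - z^k‖`. Once `ŷ^{k+1} = y^k`, the second term equals
`μ_{k+1} ‖y^{k+1} - y^k‖`; this also gives `z^k → c(x̄)`, so the iterates eventually lie in `U`.
Bounding `‖y^{k+1} - y^k‖ ≤ ‖y^{k+1} - ȳ‖ + ‖y^k - ȳ‖ ≤ ρ (Θ_{k+1} + Θ_k)` by the error bound,
and the first term by `ε_{k+1}`, gives the claim.
-/

/-- `z ∈ prox_{μ g}(v)`. -/
def IsProxPoint (g : Euc m → EReal) (μ : ℝ) (v z : Euc m) : Prop :=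
  ∀ w, g z + ((‖z - v‖ ^ 2 / (2 * μ) : ℝ) : EReal) ≤ g w + ((‖w - v‖ ^ 2 / (2 * μ) : ℝ) : EReal)

theorem zero_le_liminf_nhdsNE_of_neg_mul_norm_le {E : Type*} [NormedAddCommGroup E]
    {F : E → EReal} {z : E} {C : ℝ}
    (h : ∀ᶠ w in 𝓝[≠] z, ((-C * ‖w - z‖ : ℝ) : EReal) ≤ F w) :
    0 ≤ liminf F (𝓝[≠] z) := by
  rcases (𝓝[≠] z).eq_or_neBot with hbot | hne
  · simp [hbot]
  · have hlim : Tendsto (fun w => -C * ‖w - z‖) (𝓝 z) (𝓝 0) := by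
      have hcont : Continuous fun w => -C * ‖w - z‖ := by fun_prop
      simpa using hcont.tendsto z
    have hlim' : Tendsto (fun w => ((-C * ‖w - z‖ : ℝ) : EReal)) (𝓝[≠] z) (𝓝 0) :=
      (EReal.tendsto_coe.2 hlim).mono_left nhdsWithin_le_nhds
    exact hlim'.liminf_eq.symm.le.trans (liminf_le_liminf h)

theorem neg_sq_div_le_of_prox_ineq {E : Type*} [NormedAddCommGroup E] [InnerProductSpace ℝ E]
    {μ r s : ℝ} {v z w : E}
    (h : r + ‖z - v‖ ^ 2 / (2 * μ) ≤ s + ‖w - v‖ ^ 2 / (2 * μ)) :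
    -(‖w - z‖ ^ 2 / (2 * μ)) ≤ s - r - inner ℝ (μ⁻¹ • (v - z)) (w - z) := by
  have hexp : ‖w - v‖ ^ 2 = ‖w - z‖ ^ 2 + 2 * inner ℝ (w - z) (z - v) + ‖z - v‖ ^ 2 := by
    rw [← norm_add_sq_real, sub_add_sub_cancel]
  have hinner : inner ℝ (μ⁻¹ • (v - z)) (w - z) = -(μ⁻¹ * inner ℝ (w - z) (z - v)) := by
    rw [real_inner_smul_left, real_inner_comm, ← neg_sub z v, inner_neg_right, mul_neg]
  have hscale : μ⁻¹ * inner ℝ (w - z) (z - v) = 2 * inner ℝ (w - z) (z - v) / (2 * μ) := by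
    rw [mul_div_mul_left _ _ two_ne_zero, inv_mul_eq_div]
  rw [hexp, add_div, add_div] at h
  rw [hinner, hscale]
  linarith

section Prox

variable {g : Euc m → EReal} {μ : ℝ} {v z : Euc m}

theorem IsProxPoint.mem_edom (hgp : ProperFn g) (h : IsProxPoint g μ v z) : z ∈ edom g := by
  obtain ⟨w, hw⟩ := hgp.2
  lift g w to ℝ using ⟨hw.ne, hgp.1 w⟩ with s hs
  refine lt_top_iff_ne_top.2 fun (htop : g z = ⊤) => ?_
  have hle := h w
  rw [htop, EReal.top_add_coe, ← hs, ← EReal.coe_add, top_le_iff] at hle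
  exact EReal.coe_ne_top _ hle

theorem IsProxPoint.inv_smul_sub_mem_regSubdiff (hgp : ProperFn g)
    (h : IsProxPoint g μ v z) : μ⁻¹ • (v - z) ∈ regSubdiff g z := by
  lift g z to ℝ using ⟨h.mem_edom hgp |>.ne, hgp.1 z⟩ with r hr
  refine zero_le_liminf_nhdsNE_of_neg_mul_norm_le (C := (2 * μ)⁻¹) ?_
  filter_upwards [self_mem_nhdsWithin] with w hw
  have hd : 0 < ‖w - z‖ := norm_pos_iff.2 (sub_ne_zero.2 hw)
  rcases eq_or_ne (g w) ⊤ with htop | htop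
  · rw [htop, ← hr, EReal.top_sub_coe, EReal.top_sub_coe,
      EReal.top_div_of_pos_ne_top (EReal.coe_pos.2 hd) (EReal.coe_ne_top _)]
    exact le_top
  · lift g w to ℝ using ⟨htop, hgp.1 w⟩ with s hs
    have hle := h w
    rw [← hr, ← hs, ← EReal.coe_add, ← EReal.coe_add, EReal.coe_le_coe_iff] at hle
    rw [← hr, ← EReal.coe_sub, ← EReal.coe_sub, ← EReal.coe_div, EReal.coe_le_coe_iff,
      le_div_iff₀ hd]
    exact (by ring : -(2 * μ)⁻¹ * ‖w - z‖ * ‖w - z‖ = -(‖w - z‖ ^ 2 / (2 * μ))).trans_le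
      (neg_sq_div_le_of_prox_ineq hle)

end Prox

theorem regSubdiff_subset_limSubdiff (g : Euc m → EReal) (z : Euc m) :
    regSubdiff g z ⊆ limSubdiff g z := fun v hv =>
  ⟨fun _ => z, fun _ => v, tendsto_const_nhds, tendsto_const_nhds, tendsto_const_nhds,
    fun _ => hv⟩

theorem Theta_eq_of_mem_limSubdiff {f : Euc n → ℝ} {c : Euc n → Euc m} {g : Euc m → EReal}
    {x : Euc n} {z y : Euc m} (hy : y ∈ limSubdiff g z) :
    Theta f c g x z y = ((‖fderiv ℝ (LagFn f c y) x‖ + ‖c x - z‖ : ℝ) : EReal) := by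
  have hdist : (⨅ v ∈ limSubdiff g z, ((‖y - v‖ : ℝ) : EReal)) = 0 :=
    le_antisymm ((iInf₂_le y hy).trans_eq (by simp))
      (le_iInf₂ fun v _ => EReal.coe_nonneg.2 (norm_nonneg _))
  rw [Theta, hdist, add_zero]

theorem one_sub_mul_le_of_errorBound {E : Type*} [SeminormedAddCommGroup E] {y₀ y₁ ybar : E}
    {T₀ T₁ ε μ ρ : ℝ} (hμ : 0 ≤ μ) (hT : T₁ ≤ ε + μ * ‖y₁ - y₀‖)
    (h₀ : ‖y₀ - ybar‖ ≤ ρ * T₀) (h₁ : ‖y₁ - ybar‖ ≤ ρ * T₁) :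
    (1 - ρ * μ) * T₁ ≤ ε + ρ * μ * T₀ := by
  have htri : ‖y₁ - y₀‖ ≤ ρ * T₁ + ρ * T₀ :=
    (norm_sub_le_norm_sub_add_norm_sub y₁ ybar y₀).trans
      (add_le_add h₁ ((norm_sub_rev ybar y₀).trans_le h₀))
  nlinarith [mul_le_mul_of_nonneg_left htri hμ]

namespace ALMSeq

variable {f : Euc n → ℝ} {c : Euc n → Euc m} {g : Euc m → EReal} (A : ALMSeq n m f c g)

/-- `Θ_k` of the paper, see `theta_eq_residual`. -/
def residual (k : ℕ) : ℝ := ‖fderiv ℝ (LagFn f c (A.y k)) (A.x k)‖ + ‖c (A.x k) - A.z k‖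

theorem μ_pos (k : ℕ) : 0 < A.μ k := (A.hμthr k).1

theorem μ_antitone : Antitone A.μ := by
  refine antitone_nat_of_succ_le fun k => ?_
  rw [A.hμupd k]
  split_ifs
  · exact le_rfl
  · exact mul_le_of_le_one_left (A.μ_pos k).le A.hκ.2.le

theorem isProxPoint (k : ℕ) :
    IsProxPoint g (A.μ k) (c (A.x k) + A.μ k • A.yhat k) (A.z k) :=
  A.hprox k

theorem sub_z_eq (k : ℕ) : c (A.x k) - A.z k = A.μ k • (A.y k - A.yhat k) := by
  rw [A.hy k, add_sub_cancel_left, smul_smul, mul_inv_cancel₀ (A.μ_pos k).ne', one_smul]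

theorem y_mem_limSubdiff (hgp : ProperFn g) (k : ℕ) : A.y k ∈ limSubdiff g (A.z k) := by
  have hy : A.y k = (A.μ k)⁻¹ • (c (A.x k) + A.μ k • A.yhat k - A.z k) := by
    rw [add_sub_right_comm, smul_add, smul_smul, inv_mul_cancel₀ (A.μ_pos k).ne', one_smul,
      A.hy k, add_comm]
  rw [hy]
  exact regSubdiff_subset_limSubdiff _ _
    ((A.isProxPoint k).inv_smul_sub_mem_regSubdiff hgp)

theorem theta_eq_residual (hgp : ProperFn g) (k : ℕ) :
    Theta f c g (A.x k) (A.z k) (A.y k) = A.residual k :=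
  Theta_eq_of_mem_limSubdiff (A.y_mem_limSubdiff hgp k)

theorem norm_sub_z_succ {k : ℕ} (hk : A.yhat (k + 1) = A.y k) :
    ‖c (A.x (k + 1)) - A.z (k + 1)‖ = A.μ (k + 1) * ‖A.y (k + 1) - A.y k‖ := by
  rw [A.sub_z_eq, hk, norm_smul, Real.norm_of_nonneg (A.μ_pos _).le]

theorem residual_succ_le {k : ℕ} (hk : A.yhat (k + 1) = A.y k) :
    A.residual (k + 1) ≤ A.ε (k + 1) + A.μ (k + 1) * ‖A.y (k + 1) - A.y k‖ := by
  rw [residual, A.norm_sub_z_succ hk]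
  linarith [A.hdual (k + 1)]

theorem tendsto_z {xbar : Euc n} {ybar : Euc m} (hc : Continuous c)
    (hx : Tendsto A.x atTop (𝓝 xbar)) (hy : Tendsto A.y atTop (𝓝 ybar))
    (hyh : ∀ᶠ k in atTop, A.yhat (k + 1) = A.y k) :
    Tendsto A.z atTop (𝓝 (c xbar)) := by
  rw [← tendsto_add_atTop_iff_nat 1]
  have hdy : Tendsto (fun k => A.y (k + 1) - A.y k) atTop (𝓝 0) := by
    simpa using ((tendsto_add_atTop_iff_nat 1).2 hy).sub hy
  have hstep : Tendsto (fun k => A.μ (k + 1) • (A.y (k + 1) - A.y k)) atTop (𝓝 0) := by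
    refine squeeze_zero_norm (fun k => ?_) (by simpa using hdy.norm.const_mul (A.μ 0))
    rw [norm_smul, Real.norm_of_nonneg (A.μ_pos _).le]
    exact mul_le_mul_of_nonneg_right (A.μ_antitone (Nat.zero_le _)) (norm_nonneg _)
  have hlim := ((hc.tendsto xbar).comp ((tendsto_add_atTop_iff_nat 1).2 hx)).sub hstep
  rw [sub_zero] at hlim
  refine hlim.congr' (hyh.mono fun k hk => ?_)
  rw [Function.comp_apply, ← hk, ← A.sub_z_eq, sub_sub_cancel]

end ALMSeq

theorem statement18_general {n m : ℕ}
    (f : Euc n → ℝ) (c : Euc n → Euc m) (g : Euc m → EReal)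
    (hc : ContDiff ℝ 2 c)
    (hgp : ProperFn g)
    (xbar : Euc n) (ybar : Euc m)
    (ρ : ℝ) (U : Set (Euc n × Euc m × Euc m))
    (hU : U ∈ 𝓝 ((xbar, c xbar, ybar) : Euc n × Euc m × Euc m))
    (hub : ∀ (x : Euc n) (z y : Euc m), (x, z, y) ∈ U → z ∈ edom g →
      ((‖x - xbar‖ + ‖z - c xbar‖ + ‖y - ybar‖ : ℝ) : EReal) ≤
        (ρ : EReal) * Theta f c g x z y)
    (A : ALMSeq n m f c g)
    (hxy : Tendsto (fun k => (A.x k, A.y k)) atTop (𝓝 (xbar, ybar)))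
    (hyh : ∀ᶠ k in atTop, A.yhat (k + 1) = A.y k) :
    ∀ᶠ k in atTop,
      ((1 - ρ * A.μ (k + 1) : ℝ) : EReal) * Theta f c g (A.x (k + 1)) (A.z (k + 1)) (A.y (k + 1))
        ≤ (A.ε (k + 1) : EReal) +
            ((ρ * A.μ (k + 1) : ℝ) : EReal) * Theta f c g (A.x k) (A.z k) (A.y k) := by
  have hx : Tendsto A.x atTop (𝓝 xbar) := hxy.fst_nhds
  have hy : Tendsto A.y atTop (𝓝 ybar) := hxy.snd_nhds
  have hz := A.tendsto_z hc.continuous hx hy hyh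
  have hbound : ∀ k, (A.x k, A.z k, A.y k) ∈ U → ‖A.y k - ybar‖ ≤ ρ * A.residual k := by
    intro k hk
    have hle := hub _ _ _ hk ((A.isProxPoint k).mem_edom hgp)
    rw [A.theta_eq_residual hgp, ← EReal.coe_mul, EReal.coe_le_coe_iff] at hle
    linarith [norm_nonneg (A.x k - xbar), norm_nonneg (A.z k - c xbar)]
  have hU' : ∀ᶠ k in atTop, (A.x k, A.z k, A.y k) ∈ U :=
    (hx.prodMk_nhds (hz.prodMk_nhds hy)).eventually_mem hU
  filter_upwards [hU', (tendsto_add_atTop_nat 1).eventually hU', hyh] with k h₀ h₁ hk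
  rw [A.theta_eq_residual hgp, A.theta_eq_residual hgp, ← EReal.coe_mul, ← EReal.coe_mul,
    ← EReal.coe_add, EReal.coe_le_coe_iff]
  exact one_sub_mul_le_of_errorBound (A.μ_pos _).le (A.residual_succ_le hk) (hbound k h₀)
    (hbound (k + 1) h₁)

theorem statement18 {n m : ℕ}
    (f : Euc n → ℝ) (c : Euc n → Euc m) (g : Euc m → EReal)
    (hf : ContDiff ℝ 2 f) (hc : ContDiff ℝ 2 c)
    (hgp : ProperFn g) (hglsc : LowerSemicontinuous g) (hgpb : ProxBounded g)
    (hphi : ∃ r : ℝ, (⨅ x : Euc n, ((f x : EReal) + g (c x))) = (r : EReal))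
    (xbar : Euc n) (ybar : Euc m) (hybar : ybar ∈ Lambda f c g xbar)
    (ρ : ℝ) (hρ : 0 < ρ) (U : Set (Euc n × Euc m × Euc m))
    (hU : U ∈ 𝓝 ((xbar, c xbar, ybar) : Euc n × Euc m × Euc m))
    (hub : ∀ (x : Euc n) (z y : Euc m), (x, z, y) ∈ U → z ∈ edom g →
      ((‖x - xbar‖ + ‖z - c xbar‖ + ‖y - ybar‖ : ℝ) : EReal) ≤
        (ρ : EReal) * Theta f c g x z y)
    (A : ALMSeq n m f c g)
    (hε0 : Tendsto A.ε atTop (𝓝 0))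
    (hxy : Tendsto (fun k => (A.x k, A.y k)) atTop (𝓝 (xbar, ybar)))
    (hyh : ∀ᶠ k in atTop, A.yhat (k + 1) = A.y k) :
    ∀ᶠ k in atTop,
      ((1 - ρ * A.μ (k + 1) : ℝ) : EReal) * Theta f c g (A.x (k + 1)) (A.z (k + 1)) (A.y (k + 1))
        ≤ (A.ε (k + 1) : EReal) +
            ((ρ * A.μ (k + 1) : ℝ) : EReal) * Theta f c g (A.x k) (A.z k) (A.y k) :=
  statement18_general f c g hc hgp xbar ybar ρ U hU hub A hxy hyh

end Paper
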